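/- Let n and k be positive integers with n ≥ 2k ≥ 8, and let r be the remainder of n − 3 upon division by k − 2. Then ex_P(n, 2C_k) ≥ (3 − 1/(k−2))·n + (3 + r)/(k−2) − 5 + max{1 − r, 0}. -/

import Mathlib

/-!
The lower bound comes from one planar graph. Join two adjacent apexes `0`, `1`, placed on either
side of a line, to every vertex of a path `2, 3, …, n - 1` drawn on that line, and delete path
edges so that the path falls apart into a first segment of `2k - 3` vertices followed by segments
of `k - 2` vertices. Every cycle passes through an apex, since the rest is a linear forest. A
`k`-cycle through only one apex runs through `k - 1` vertices of a single segment, so it lies in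
the first one. Two disjoint `k`-cycles use one apex each, so together they need `2k - 2` vertices
of the first segment, which has only `2k - 3`. Before the deletions the graph is a triangulation
with `3n - 6` edges, and only `⌊(n - k - 2)/(k - 2)⌋` path edges are deleted; this count is the
stated bound.
-/

open SimpleGraph

/-- A graph is planar if it admits a drawing in the plane: vertices are mapped to distinct
points, each edge is drawn as a simple continuous arc between the images of its endpoints,
the interior of each arc avoids all vertex images, and the interiors of arcs of distinct
edges are pairwise disjoint. -/
def IsPlanar {V : Type*} (G : SimpleGraph V) : Prop :=
  ∃ (pos : V → ℝ × ℝ) (arc : V → V → ℝ → ℝ × ℝ),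
    Function.Injective pos ∧
    (∀ u v, G.Adj u v →
      Continuous (arc u v) ∧
      arc u v 0 = pos u ∧ arc u v 1 = pos v ∧
      Set.InjOn (arc u v) (Set.Icc 0 1) ∧
      (∀ t ∈ Set.Ioo (0:ℝ) 1, ∀ w, arc u v t ≠ pos w) ∧
      (∀ t, arc u v t = arc v u (1 - t))) ∧
    (∀ u v x y, G.Adj u v → G.Adj x y → s(u, v) ≠ s(x, y) →
      ∀ s ∈ Set.Ioo (0:ℝ) 1, ∀ t ∈ Set.Ioo (0:ℝ) 1, arc u v s ≠ arc x y t)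

/-- `G` contains a copy of `H` (i.e. a subgraph isomorphic to `H`). -/
def ContainsCopy {V W : Type*} (G : SimpleGraph V) (H : SimpleGraph W) : Prop :=
  ∃ f : H →g G, Function.Injective f

/-- The planar Turán number: the maximum number of edges of an `H`-free planar graph
on `n` vertices. -/
noncomputable def exP {W : Type*} (n : ℕ) (H : SimpleGraph W) : ℕ :=
  sSup {m | ∃ G : SimpleGraph (Fin n), IsPlanar G ∧ ¬ ContainsCopy G H ∧ G.edgeSet.ncard = m}

/-- The disjoint union of `t` copies of `G`. -/
def copies {V : Type*} (t : ℕ) (G : SimpleGraph V) : SimpleGraph (Fin t × V) where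
  Adj x y := x.1 = y.1 ∧ G.Adj x.2 y.2
  symm := ⟨by rintro ⟨i, a⟩ ⟨j, b⟩ ⟨h1, h2⟩; exact ⟨h1.symm, h2.symm⟩⟩
  loopless := ⟨by rintro ⟨i, a⟩ ⟨_, h⟩; exact G.irrefl h⟩

/-- `C_k^+`: the cycle on `k` vertices together with one pendant edge. -/
def cyclePlus (k : ℕ) : SimpleGraph (Fin k ⊕ Unit) :=
  SimpleGraph.fromRel (fun x y =>
    (∃ a b : Fin k, x = Sum.inl a ∧ y = Sum.inl b ∧ (cycleGraph k).Adj a b) ∨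
    (∃ a : Fin k, (a : ℕ) = 0 ∧ x = Sum.inl a ∧ y = Sum.inr ()))

open Finset

lemma Fin.not_injective_of_unit_steps {k : ℕ} [NeZero k] (hk : 3 ≤ k) (g : Fin k → ℕ)
    (hstep : ∀ i, g (i + 1) = g i + 1 ∨ g i = g (i + 1) + 1) : ¬ Function.Injective g := by
  intro hg
  obtain ⟨i, -, hmax⟩ := exists_max_image univ g univ_nonempty
  have hnext : g (i + 1) + 1 = g i := by
    have := hmax (i + 1) (mem_univ _)
    rcases hstep i with h | h <;> omega
  have hprev : g (i - 1) + 1 = g i := by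
    have := hmax (i - 1) (mem_univ _)
    have := hstep (i - 1)
    rw [sub_add_cancel] at this
    omega
  have htwo : (1 + 1 : Fin k) = 0 := by
    have h : i + 1 = i - 1 := hg (by omega)
    rwa [← sub_eq_zero, add_sub_sub_cancel] at h
  have := congrArg Fin.val htwo
  rw [Fin.val_add, Fin.val_one', Nat.mod_eq_of_lt (by omega : 1 < k),
    Nat.mod_eq_of_lt (by omega : 1 + 1 < k)] at this
  simp at this

lemma Fin.apply_eq_of_forall_apply_add_one_eq {k : ℕ} [NeZero k] {β : Type*} (f : Fin k → β)
    (i₀ : Fin k) (hstep : ∀ i, i ≠ i₀ → i + 1 ≠ i₀ → f i = f (i + 1)) (i : Fin k)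
    (hi : i ≠ i₀) : f i = f (i₀ + 1) := by
  suffices ∀ t : ℕ, ∀ i, (i - (i₀ + 1)).val = t → i ≠ i₀ → f i = f (i₀ + 1) from
    this _ i rfl hi
  intro t
  induction t with
  | zero =>
    intro i ht _
    rw [Fin.val_eq_zero_iff, sub_eq_zero] at ht
    rw [ht]
  | succ t ih =>
    intro i ht hi
    have hne : i - (i₀ + 1) ≠ 0 := by
      intro h
      simp [h] at ht
    have hprev : i - 1 ≠ i₀ := by
      rintro rfl
      simp at hne
    rw [← ih (i - 1) ?_ hprev, hstep (i - 1) hprev (by simpa using hi), sub_add_cancel]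
    rw [sub_right_comm, Fin.val_sub_one_of_ne_zero hne, ht, Nat.add_sub_cancel]

lemma cycleGraph_adj_add_one {k : ℕ} [NeZero k] (hk : 2 ≤ k) (i : Fin k) :
    (cycleGraph k).Adj i (i + 1) := by
  rw [cycleGraph_adj', add_sub_cancel_left, Fin.val_one', Nat.mod_eq_of_lt hk]
  exact Or.inr rfl

lemma ContainsCopy.trans_embedding {U V W : Type*} {H : SimpleGraph U} {G : SimpleGraph V}
    {G' : SimpleGraph W} (h : ContainsCopy G H) (e : G ↪g G') : ContainsCopy G' H :=
  let ⟨f, hf⟩ := h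
  ⟨e.toHom.comp f, e.injective.comp hf⟩

lemma le_exP {n : ℕ} {W : Type*} {H : SimpleGraph W} {G : SimpleGraph (Fin n)} (hG : IsPlanar G)
    (hGH : ¬ ContainsCopy G H) : G.edgeSet.ncard ≤ exP n H :=
  le_csSup ⟨(Set.univ : Set (Sym2 (Fin n))).ncard, by
    rintro _ ⟨G, -, -, rfl⟩
    exact Set.ncard_le_ncard (Set.subset_univ _)⟩ ⟨G, hG, hGH, rfl⟩

lemma isPlanar_of_openSegment {V : Type*} (G : SimpleGraph V) (pos : V → ℝ × ℝ)
    (hpos : Function.Injective pos)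
    (hvert : ∀ u v w, G.Adj u v → pos w ∉ openSegment ℝ (pos u) (pos v))
    (hedge : ∀ u v x y, G.Adj u v → G.Adj x y → s(u, v) ≠ s(x, y) →
      Disjoint (openSegment ℝ (pos u) (pos v)) (openSegment ℝ (pos x) (pos y))) :
    IsPlanar G := by
  refine ⟨pos, fun u v => AffineMap.lineMap (pos u) (pos v), hpos,
    fun u v huv => ⟨AffineMap.lineMap_continuous, by simp, by simp,
      (AffineMap.lineMap_injective ℝ (hpos.ne huv.ne)).injOn, ?_,
      fun t => (AffineMap.lineMap_apply_one_sub _ _ _).symm⟩, ?_⟩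
  · intro t ht w hw
    exact hvert u v w huv (hw ▸ lineMap_mem_openSegment ℝ _ _ ht)
  · intro u v x y huv hxy hne s hs t ht
    exact (hedge u v x y huv hxy hne).ne_of_mem (lineMap_mem_openSegment ℝ _ _ hs)
      (lineMap_mem_openSegment ℝ _ _ ht)

lemma card_filter_Ico_eq_add (f : ℕ → ℕ) (hf : ∀ i, f (i + 1) ∈ Icc (f i) (f i + 1))
    {a b : ℕ} (hab : a ≤ b) : #{i ∈ Ico a b | f i = f (i + 1)} + f b = b - a + f a := by
  induction b, hab using Nat.le_induction with
  | base => simp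
  | succ b hab ih =>
    rw [Nat.Ico_succ_right_eq_insert_Ico hab, filter_insert]
    have := mem_Icc.mp (hf b)
    split_ifs with h
    · rw [card_insert_of_notMem (by simp)]
      omega
    · omega

lemma mk_mem_image_edgeSet_comap_val {H : SimpleGraph ℕ} {n u v : ℕ} (hu : u < n) (hv : v < n)
    (h : H.Adj u v) : s(u, v) ∈ Sym2.map Fin.val '' (H.comap (Fin.val : Fin n → ℕ)).edgeSet :=
  ⟨s(⟨u, hu⟩, ⟨v, hv⟩), h, rfl⟩

def apexPathGraph (blk : ℕ → ℕ) : SimpleGraph ℕ :=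
  SimpleGraph.fromRel fun u v => u < 2 ∨ (2 ≤ u ∧ v = u + 1 ∧ blk u = blk v)

section apexPathGraph

variable {blk : ℕ → ℕ} {u v x y : ℕ}

lemma apexPathGraph_adj_of_lt (h : (apexPathGraph blk).Adj u v) (huv : u < v) :
    u < 2 ∨ (2 ≤ u ∧ v = u + 1) := by
  simp only [apexPathGraph, fromRel_adj] at h
  omega

lemma apexPathGraph_adj_of_two_le (h : (apexPathGraph blk).Adj u v) (hu : 2 ≤ u) (hv : 2 ≤ v) :
    (v = u + 1 ∨ u = v + 1) ∧ blk u = blk v := by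
  simp only [apexPathGraph, fromRel_adj] at h
  omega

lemma apexPathGraph_adj_of_lt_two (hu : u < 2) (huv : u ≠ v) : (apexPathGraph blk).Adj u v := by
  simp only [apexPathGraph, fromRel_adj]
  omega

lemma apexPathGraph_adj_add_one (hu : 2 ≤ u) (h : blk u = blk (u + 1)) :
    (apexPathGraph blk).Adj u (u + 1) := by
  rw [apexPathGraph, fromRel_adj]
  exact ⟨by omega, Or.inl (Or.inr ⟨hu, rfl, h⟩)⟩

noncomputable def apexPathPos (v : ℕ) : ℝ × ℝ :=
  if v = 0 then (0, 1) else if v = 1 then (0, -1) else ((v : ℝ), 0)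

/-- The edge of the straight-line drawing through an interior point `p`: the edge `01` lies on the
y-axis, the edges at `0` (resp. `1`) in the open upper (resp. lower) half-plane, where `p` and the
apex determine the other endpoint, and the path edges on the positive x-axis. -/
noncomputable def apexPathEdgeAt (p : ℝ × ℝ) : Sym2 ℕ :=
  if p.1 = 0 then s(0, 1)
  else if 0 < p.2 then s(0, ⌊p.1 / (1 - p.2)⌋₊)
  else if p.2 < 0 then s(1, ⌊p.1 / (1 + p.2)⌋₊)
  else s(⌊p.1⌋₊, ⌊p.1⌋₊ + 1)

lemma apexPathPos_of_two_le (hv : 2 ≤ v) : apexPathPos v = ((v : ℝ), 0) := by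
  rw [apexPathPos, if_neg (by omega), if_neg (by omega)]

lemma apexPathPos_injective : Function.Injective apexPathPos := by
  intro u v h
  simp only [apexPathPos] at h
  split_ifs at h <;> simp_all [Prod.ext_iff] <;> norm_num at h

lemma mem_apexPathEdgeAt_apexPathPos (v : ℕ) : v ∈ apexPathEdgeAt (apexPathPos v) := by
  rcases (by omega : v = 0 ∨ v = 1 ∨ 2 ≤ v) with rfl | rfl | hv
  · simp [apexPathPos, apexPathEdgeAt]
  · simp [apexPathPos, apexPathEdgeAt]
  · rw [apexPathPos_of_two_le hv, apexPathEdgeAt]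
    simp [show v ≠ 0 by omega]

lemma apexPathEdgeAt_of_mem_openSegment (h : (apexPathGraph blk).Adj u v) {p : ℝ × ℝ}
    (hp : p ∈ openSegment ℝ (apexPathPos u) (apexPathPos v)) : apexPathEdgeAt p = s(u, v) := by
  wlog huv : u < v generalizing u v
  · rw [Sym2.eq_swap]
    exact this h.symm (by rwa [openSegment_symm]) (lt_of_le_of_ne (not_lt.mp huv) h.ne.symm)
  obtain ⟨a, b, ha, hb, hab, rfl⟩ := hp
  rcases apexPathGraph_adj_of_lt h huv with hu | ⟨hu, rfl⟩
  · rcases (by omega : u = 0 ∨ u = 1) with rfl | rfl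
    · rcases (by omega : v = 1 ∨ 2 ≤ v) with rfl | hv
      · simp [apexPathPos, apexPathEdgeAt]
      · rw [apexPathPos_of_two_le hv]
        simp [apexPathPos, apexPathEdgeAt, hb.ne', ha, show v ≠ 0 by omega,
          show 1 - a = b by linarith]
    · rw [apexPathPos_of_two_le (show 2 ≤ v by omega)]
      simp [apexPathPos, apexPathEdgeAt, hb.ne', ha, ha.not_gt, show v ≠ 0 by omega,
        ← sub_eq_add_neg, show 1 - a = b by linarith]
  · rw [apexPathPos_of_two_le hu, apexPathPos_of_two_le (by omega), apexPathEdgeAt]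
    have hfloor : ⌊(u : ℝ) + b⌋₊ = u := by
      rw [Nat.floor_eq_iff (by positivity)]
      constructor <;> linarith
    simp only [Prod.smul_mk, Prod.mk_add_mk, smul_eq_mul, mul_zero, add_zero]
    push_cast
    rw [show a * u + b * (u + 1) = (u : ℝ) + b by linear_combination (u : ℝ) * hab]
    simp [hfloor, (by positivity : (u : ℝ) + b ≠ 0)]

lemma apexPathPos_not_mem_openSegment (h : (apexPathGraph blk).Adj u v) (w : ℕ) :
    apexPathPos w ∉ openSegment ℝ (apexPathPos u) (apexPathPos v) := by
  intro hw
  have hne : apexPathPos u ≠ apexPathPos v := apexPathPos_injective.ne h.ne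
  have := apexPathEdgeAt_of_mem_openSegment h hw ▸ mem_apexPathEdgeAt_apexPathPos w
  rcases Sym2.mem_iff.mp this with rfl | rfl
  · exact hne (left_mem_openSegment_iff.mp hw)
  · exact hne (right_mem_openSegment_iff.mp hw)

lemma disjoint_openSegment_apexPathPos (huv : (apexPathGraph blk).Adj u v)
    (hxy : (apexPathGraph blk).Adj x y) (hne : s(u, v) ≠ s(x, y)) :
    Disjoint (openSegment ℝ (apexPathPos u) (apexPathPos v))
      (openSegment ℝ (apexPathPos x) (apexPathPos y)) :=
  Set.disjoint_left.mpr fun _ hp hq =>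
    hne ((apexPathEdgeAt_of_mem_openSegment huv hp).symm.trans
      (apexPathEdgeAt_of_mem_openSegment hxy hq))

lemma isPlanar_comap_apexPathGraph (n : ℕ) (blk : ℕ → ℕ) :
    IsPlanar ((apexPathGraph blk).comap (Fin.val : Fin n → ℕ)) := by
  refine isPlanar_of_openSegment _ (apexPathPos ∘ Fin.val)
    (apexPathPos_injective.comp Fin.val_injective)
    (fun u v w h => apexPathPos_not_mem_openSegment h w)
    (fun u v x y huv hxy hne => disjoint_openSegment_apexPathPos huv hxy ?_)
  rwa [← Sym2.map_mk, ← Sym2.map_mk, (Sym2.map.injective Fin.val_injective).ne_iff]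

lemma le_ncard_edgeSet_comap_apexPathGraph (hblk : ∀ i, blk (i + 1) ∈ Icc (blk i) (blk i + 1))
    {n : ℕ} (hn : 3 ≤ n) :
    3 * n - 6 - (blk (n - 1) - blk 2) ≤
      ((apexPathGraph blk).comap (Fin.val : Fin n → ℕ)).edgeSet.ncard := by
  let apex₀ := (Ico 1 n).image fun v => s(0, v)
  let apex₁ := (Ico 2 n).image fun v => s(1, v)
  let path := {v ∈ Ico 2 (n - 1) | blk v = blk (v + 1)}.image fun v => s(v, v + 1)
  have hsub : ↑(apex₀ ∪ apex₁ ∪ path) ⊆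
      Sym2.map Fin.val '' ((apexPathGraph blk).comap (Fin.val : Fin n → ℕ)).edgeSet := by
    intro e he
    simp only [coe_union, Set.mem_union, mem_coe, mem_image, mem_filter, mem_Ico, apex₀, apex₁,
      path] at he
    rcases he with (⟨v, hv, rfl⟩ | ⟨v, hv, rfl⟩) | ⟨v, ⟨hv, hv'⟩, rfl⟩
    · exact mk_mem_image_edgeSet_comap_val (by omega) hv.2
        (apexPathGraph_adj_of_lt_two (by norm_num) (by omega))
    · exact mk_mem_image_edgeSet_comap_val (by omega) hv.2
        (apexPathGraph_adj_of_lt_two (by norm_num) (by omega))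
    · exact mk_mem_image_edgeSet_comap_val (by omega) (by omega)
        (apexPathGraph_adj_add_one hv.1 hv')
  have hinj₀ : Function.Injective fun v : ℕ => s(0, v) := fun _ _ => Sym2.congr_right.mp
  have hinj₁ : Function.Injective fun v : ℕ => s(1, v) := fun _ _ => Sym2.congr_right.mp
  have hinj : Function.Injective fun v : ℕ => s(v, v + 1) := fun v w h => by
    rw [Sym2.eq_iff] at h
    omega
  have hdisj₀₁ : Disjoint apex₀ apex₁ := by
    simp only [Finset.disjoint_left, mem_image, mem_Ico, apex₀, apex₁]
    rintro _ ⟨v, hv, rfl⟩ ⟨w, hw, h⟩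
    rw [Sym2.eq_iff] at h
    omega
  have hdisj : Disjoint (apex₀ ∪ apex₁) path := by
    simp only [Finset.disjoint_left, mem_union, mem_image, mem_Ico, mem_filter, apex₀, apex₁, path]
    rintro _ (⟨v, hv, rfl⟩ | ⟨v, hv, rfl⟩) ⟨w, hw, h⟩ <;> rw [Sym2.eq_iff] at h <;> omega
  have hpath := card_filter_Ico_eq_add blk hblk (show 2 ≤ n - 1 by omega)
  have := Set.ncard_le_ncard hsub (Set.toFinite _)
  rw [Set.ncard_coe_finset, Set.ncard_image_of_injective _ (Sym2.map.injective Fin.val_injective),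
    card_union_of_disjoint hdisj, card_union_of_disjoint hdisj₀₁, card_image_of_injective _ hinj₀,
    card_image_of_injective _ hinj₁, card_image_of_injective _ hinj, Nat.card_Ico,
    Nat.card_Ico] at this
  omega

variable {k : ℕ} [NeZero k] (f : cycleGraph k →g apexPathGraph blk)

lemma exists_lt_two_of_cycle (hk : 3 ≤ k) (hf : Function.Injective f) : ∃ i, f i < 2 := by
  by_contra! hbig
  refine Fin.not_injective_of_unit_steps hk f (fun i => ?_) hf
  have := apexPathGraph_adj_of_two_le (f.map_adj (cycleGraph_adj_add_one (by omega) i))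
    (hbig _) (hbig _)
  omega

lemma blk_eq_of_cycle (i₀ : Fin k) (hbig : ∀ i, i ≠ i₀ → 2 ≤ f i) (i : Fin k) (hi : i ≠ i₀) :
    blk (f i) = blk (f (i₀ + 1)) :=
  Fin.apply_eq_of_forall_apply_add_one_eq (blk ∘ f) i₀ (fun j hj hj' =>
    (apexPathGraph_adj_of_two_le (f.map_adj (cycleGraph_adj_add_one (by omega) j))
      (hbig j hj) (hbig _ hj')).2) i hi

end apexPathGraph

/-- Truncated subtraction puts `2, …, 2k - 2` together into block `0`, of size `2k - 3`; the later
blocks have `k - 2` vertices each. -/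
def cycleBlock (k v : ℕ) : ℕ := (v - (k + 1)) / (k - 2)

section cycleBlock

variable {k : ℕ}

lemma cycleBlock_add_one_mem_Icc (hk : 4 ≤ k) (v : ℕ) :
    cycleBlock k (v + 1) ∈ Icc (cycleBlock k v) (cycleBlock k v + 1) := by
  have h₁ := Nat.lt_div_mul_add (a := v - (k + 1)) (show 0 < k - 2 by omega)
  have h₂ := Nat.div_mul_le_self (v + 1 - (k + 1)) (k - 2)
  refine mem_Icc.mpr ⟨Nat.div_le_div_right (by omega), Nat.lt_add_one_iff.mp ?_⟩
  unfold cycleBlock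
  rw [Nat.div_lt_iff_lt_mul (by omega), add_mul, add_mul, one_mul]
  omega

lemma le_of_cycleBlock_eq_zero (hk : 4 ≤ k) {v : ℕ} (hv : cycleBlock k v = 0) :
    v ≤ 2 * k - 2 := by
  rw [cycleBlock, Nat.div_eq_zero_iff_lt (by omega)] at hv
  omega

lemma card_le_of_cycleBlock_eq (hk : 4 ≤ k) {b : ℕ} (hb : b ≠ 0) (s : Finset ℕ)
    (hs : ∀ v ∈ s, cycleBlock k v = b) : #s ≤ k - 2 := by
  have hsub : s ⊆ Ico (k + 1 + b * (k - 2)) (k + 1 + b * (k - 2) + (k - 2)) := by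
    intro v hv
    have := (Nat.div_eq_iff (by omega)).mp (hs v hv)
    have : k - 2 ≤ b * (k - 2) := Nat.le_mul_of_pos_left _ (Nat.pos_of_ne_zero hb)
    rw [mem_Ico]
    omega
  simpa using card_le_card hsub

lemma cycle_le_two_mul_sub_two (hk : 4 ≤ k) [NeZero k]
    (f : cycleGraph k →g apexPathGraph (cycleBlock k)) (hf : Function.Injective f) (i₀ : Fin k)
    (hbig : ∀ i, i ≠ i₀ → 2 ≤ f i) (i : Fin k) (hi : i ≠ i₀) : f i ≤ 2 * k - 2 := by
  have hblk := blk_eq_of_cycle f i₀ hbig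
  by_cases hb : cycleBlock k (f (i₀ + 1)) = 0
  · exact le_of_cycleBlock_eq_zero hk (hb ▸ hblk i hi)
  · have := card_le_of_cycleBlock_eq hk hb ((univ.erase i₀).image f) (by
      simp only [mem_image, mem_erase, mem_univ, and_true]
      rintro _ ⟨j, hj, rfl⟩
      exact hblk j hj)
    rw [card_image_of_injective _ hf, card_erase_of_mem (mem_univ _), card_univ,
      Fintype.card_fin] at this
    omega

lemma not_containsCopy_apexPathGraph_cycleBlock (hk : 4 ≤ k) :
    ¬ ContainsCopy (apexPathGraph (cycleBlock k)) (copies 2 (cycleGraph k)) := by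
  have : NeZero k := ⟨by omega⟩
  rintro ⟨f, hf⟩
  let cycle (i : Fin 2) : cycleGraph k →g apexPathGraph (cycleBlock k) :=
    f.comp ⟨fun j => (i, j), fun h => ⟨rfl, h⟩⟩
  have hcycle (i : Fin 2) : Function.Injective (cycle i) :=
    fun _ _ h => (Prod.ext_iff.mp (hf h)).2
  choose a ha using fun i => exists_lt_two_of_cycle (cycle i) (by omega) (hcycle i)
  have hapex (i : Fin 2) : f (i, a i) < 2 := ha i
  -- Each of the two disjoint cycles contains one of the two apexes `0`, `1`, hence no other.
  have hbig (x : Fin 2 × Fin k) (hx : x.2 ≠ a x.1) : 2 ≤ f x := by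
    have hne (i : Fin 2) : f x ≠ f (i, a i) := hf.ne (by rintro rfl; exact hx rfl)
    have := hf.ne (show ((0 : Fin 2), a 0) ≠ (1, a 1) by simp)
    have := hapex 0; have := hapex 1; have := hne 0; have := hne 1
    omega
  have hsmall (x : Fin 2 × Fin k) (hx : x.2 ≠ a x.1) : f x ≤ 2 * k - 2 :=
    cycle_le_two_mul_sub_two hk (cycle x.1) (hcycle x.1) (a x.1) (fun j hj => hbig (x.1, j) hj)
      x.2 hx
  have hcard : #{x : Fin 2 × Fin k | x.2 ≠ a x.1} = 2 * k - 2 := by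
    simp only [card_filter, Fintype.sum_prod_type, Fin.sum_univ_two]
    simp only [← card_filter, filter_ne', card_erase_of_mem (mem_univ _), card_univ,
      Fintype.card_fin]
    omega
  have := card_le_card_of_injOn (s := {x : Fin 2 × Fin k | x.2 ≠ a x.1})
    (t := Icc 2 (2 * k - 2)) f (fun x hx => by
      have hx : x.2 ≠ a x.1 := by simpa using hx
      exact mem_Icc.mpr ⟨hbig x hx, hsmall x hx⟩) hf.injOn
  rw [hcard, Nat.card_Icc] at this
  omega

lemma not_containsCopy_comap_cycleBlock (hk : 4 ≤ k) (n : ℕ) :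
    ¬ ContainsCopy ((apexPathGraph (cycleBlock k)).comap (Fin.val : Fin n → ℕ))
      (copies 2 (cycleGraph k)) := fun h =>
  not_containsCopy_apexPathGraph_cycleBlock hk
    (h.trans_embedding (Embedding.comap Fin.valEmbedding _))

lemma le_ncard_edgeSet_comap_cycleBlock (hk : 4 ≤ k) {n : ℕ} (hn : 3 ≤ n) :
    3 * n - 6 - (n - k - 2) / (k - 2) ≤
      ((apexPathGraph (cycleBlock k)).comap (Fin.val : Fin n → ℕ)).edgeSet.ncard := by
  have := le_ncard_edgeSet_comap_apexPathGraph (cycleBlock_add_one_mem_Icc hk) hn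
  rwa [cycleBlock, cycleBlock, show n - 1 - (k + 1) = n - k - 2 by omega,
    show 2 - (k + 1) = 0 by omega, Nat.zero_div, Nat.sub_zero] at this

end cycleBlock

lemma div_add_one_add_le_div {n k : ℕ} (hk : 4 ≤ k) (hn : k + 2 ≤ n) :
    (n - k - 2) / (k - 2) + 1 + (1 - (n - 3) % (k - 2)) ≤ (n - 3) / (k - 2) := by
  have h₁ := Nat.div_mul_le_self (n - k - 2) (k - 2)
  have h₂ := Nat.div_add_mod (n - 3) (k - 2)
  have h₃ := Nat.mod_lt (n - 3) (show 0 < k - 2 by omega)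
  rw [Nat.mul_comm] at h₂
  refine Nat.lt_add_one_iff.mp (Nat.lt_of_mul_lt_mul_right (a := k - 2) ?_)
  rcases Nat.eq_zero_or_pos ((n - 3) % (k - 2)) with hr | hr
  · rw [hr] at h₂ ⊢
    simp only [Nat.sub_zero, add_mul, one_mul]
    omega
  · rw [Nat.sub_eq_zero_of_le hr]
    simp only [add_zero, add_mul, one_mul]
    omega

lemma bound_le_three_mul_sub {n k r : ℕ} (hk : 4 ≤ k) (hn : k + 2 ≤ n)
    (hr : r = (n - 3) % (k - 2)) :
    ((3 : ℝ) - 1 / ((k : ℝ) - 2)) * n + (3 + (r : ℝ)) / ((k : ℝ) - 2) - 5 + max (1 - (r : ℝ)) 0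
      ≤ ((3 * n - 6 - (n - k - 2) / (k - 2) : ℕ) : ℝ) := by
  set q := (n - 3) / (k - 2)
  set m := (n - k - 2) / (k - 2)
  have hmq : ((m + 1 + (1 - r) : ℕ) : ℝ) ≤ q := by
    exact_mod_cast hr ▸ div_add_one_add_le_div hk hn
  have hdiv : (((k - 2) * q + r : ℕ) : ℝ) = ((n - 3 : ℕ) : ℝ) := by
    rw [hr, Nat.div_add_mod]
  have hm : m ≤ n - 3 := (Nat.div_le_self _ _).trans (by omega)
  have hmax : max (1 - (r : ℝ)) 0 = ((1 - r : ℕ) : ℝ) := by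
    rcases r with _ | r <;> simp
  push_cast [Nat.cast_sub (show 2 ≤ k by omega), Nat.cast_sub (show 3 ≤ n by omega),
    Nat.cast_sub (show m ≤ 3 * n - 6 by omega), Nat.cast_sub (show 6 ≤ 3 * n by omega)] at hdiv ⊢
  push_cast at hmq
  have hd : (0 : ℝ) < k - 2 := by
    have : (4 : ℝ) ≤ k := by exact_mod_cast hk
    linarith
  have : ((3 : ℝ) - 1 / ((k : ℝ) - 2)) * n + (3 + (r : ℝ)) / ((k : ℝ) - 2) = 3 * n - q := by
    field_simp
    linear_combination hdiv
  rw [hmax]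
  linarith

/-- For `n ≥ 2k ≥ 8`, with `r` the remainder of `n - 3` modulo `k - 2`,
`ex_P(n, 2C_k) ≥ (3 - 1/(k-2))·n + (3 + r)/(k-2) - 5 + max {1 - r, 0}`. -/
theorem stmt_6 (n k : ℕ) (hk : 8 ≤ 2 * k) (hn : 2 * k ≤ n)
    (r : ℕ) (hr : r = (n - 3) % (k - 2)) :
    ((3 : ℝ) - 1 / ((k : ℝ) - 2)) * n + (3 + (r : ℝ)) / ((k : ℝ) - 2) - 5 + max (1 - (r : ℝ)) 0
      ≤ (exP n (copies 2 (cycleGraph k)) : ℝ) := by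
  have hk4 : 4 ≤ k := by omega
  refine (bound_le_three_mul_sub hk4 (by omega) hr).trans (Nat.cast_le.mpr ?_)
  exact (le_ncard_edgeSet_comap_cycleBlock hk4 (by omega)).trans
    (le_exP (isPlanar_comap_apexPathGraph n _) (not_containsCopy_comap_cycleBlock hk4 n))
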